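/- arXiv:1806.03349 — 2 statements merged into one kernel-verified Lean document; each statement's English description precedes it below -/
import Mathlib

section
/- One-step invariant for the 'up' move: with p = x/√T, x ∈ [0, √T], and x' = x + (1 - 2p), we have [1/2 + Φ_alg(x') - Φ_alg(x)] ≥ [(1-p) + Φ_yes(x') - Φ_yes(x)] - 2/√T and [1/2 + Φ_alg(x') - Φ_alg(x)] ≥ [p + Φ_no(x') - Φ_no(x)] - 2/√T. -/
/-! With `d = 1 - 2p` the increment of the state, all three potentials are quadratics in the
state, so each change is exact: `Φ_alg` gains `d² (1 - 1/√T) / 2`, while `Φ_yes` and `Φ_no`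
change by `-d (1 - p) + d² / (2√T)` and `d p + d² / (2√T)`. Both gaps then collapse to
`d² (1 - 1/√T)`, which is nonnegative as soon as `√T ≥ 1`. -/

namespace UpMove

noncomputable def phiAlg (s y : ℝ) : ℝ := s / 8 - (2 * y - s) ^ 2 / (8 * s)

noncomputable def phiYes (s y : ℝ) : ℝ := (s - y) ^ 2 / (2 * s)

noncomputable def phiNo (s y : ℝ) : ℝ := y ^ 2 / (2 * s)

noncomputable def step (s x : ℝ) : ℝ := x + (1 - 2 * (x / s))

variable {s : ℝ} (x : ℝ)

theorem phiAlg_step_sub (hs : s ≠ 0) :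
    phiAlg s (step s x) - phiAlg s x = (1 - 2 * (x / s)) ^ 2 * (1 - 1 / s) / 2 := by
  unfold phiAlg step
  field_simp
  ring

theorem phiYes_step_sub (hs : s ≠ 0) :
    phiYes s (step s x) - phiYes s x =
      -(1 - 2 * (x / s)) * (1 - x / s) + (1 - 2 * (x / s)) ^ 2 / (2 * s) := by
  unfold phiYes step
  field_simp
  ring

theorem phiNo_step_sub (hs : s ≠ 0) :
    phiNo s (step s x) - phiNo s x =
      (1 - 2 * (x / s)) * (x / s) + (1 - 2 * (x / s)) ^ 2 / (2 * s) := by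
  unfold phiNo step
  field_simp
  ring

theorem sq_mul_one_sub_one_div_nonneg (hs : 1 ≤ s) (d : ℝ) : 0 ≤ d ^ 2 * (1 - 1 / s) := by
  have : 1 / s ≤ 1 := (div_le_one (by linarith)).mpr hs
  nlinarith [sq_nonneg d]

theorem yes_le_alg (hs : 1 ≤ s) :
    (1 - x / s) + phiYes s (step s x) - phiYes s x ≤
      1 / 2 + phiAlg s (step s x) - phiAlg s x := by
  have hs0 : s ≠ 0 := by positivity
  linear_combination sq_mul_one_sub_one_div_nonneg hs (1 - 2 * (x / s)) - phiAlg_step_sub x hs0 +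
    phiYes_step_sub x hs0

theorem no_le_alg (hs : 1 ≤ s) :
    x / s + phiNo s (step s x) - phiNo s x ≤ 1 / 2 + phiAlg s (step s x) - phiAlg s x := by
  have hs0 : s ≠ 0 := by positivity
  linear_combination sq_mul_one_sub_one_div_nonneg hs (1 - 2 * (x / s)) - phiAlg_step_sub x hs0 +
    phiNo_step_sub x hs0

end UpMove

open UpMove in
theorem stmt14_general (T : ℝ) (hT : 1 ≤ T) (x : ℝ) :
    let s := Real.sqrt T
    let p := x / s
    let x' := x + (1 - 2 * p)
    let Φalg := fun y : ℝ => s / 8 - (2 * y - s) ^ 2 / (8 * s)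
    let Φyes := fun y : ℝ => (s - y) ^ 2 / (2 * s)
    let Φno := fun y : ℝ => y ^ 2 / (2 * s)
    (1 / 2 + Φalg x' - Φalg x ≥ ((1 - p) + Φyes x' - Φyes x) - 2 / s) ∧
    (1 / 2 + Φalg x' - Φalg x ≥ (p + Φno x' - Φno x) - 2 / s) := by
  intro s p x' Φalg Φyes Φno
  have hs : 1 ≤ s := Real.one_le_sqrt.mpr hT
  have hslack : 0 ≤ 2 / s := by positivity
  exact ⟨(sub_le_self _ hslack).trans (yes_le_alg x hs),
    (sub_le_self _ hslack).trans (no_le_alg x hs)⟩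

/-- One-step invariant for the 'up' move `(+1,+1)`: with `p = x/√T`, `x ∈ [0, √T]`, and
`x' = x + (1 - 2p)`, the algorithm-side change dominates both adversary-side changes up
to error `2/√T`. -/
theorem stmt14 (T : ℝ) (hT : 1 ≤ T) (x : ℝ) (hx0 : 0 ≤ x) (hx1 : x ≤ Real.sqrt T) :
    let s := Real.sqrt T
    let p := x / s
    let x' := x + (1 - 2 * p)
    let Φalg := fun y : ℝ => s / 8 - (2 * y - s) ^ 2 / (8 * s)
    let Φyes := fun y : ℝ => (s - y) ^ 2 / (2 * s)
    let Φno := fun y : ℝ => y ^ 2 / (2 * s)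
    (1 / 2 + Φalg x' - Φalg x ≥ ((1 - p) + Φyes x' - Φyes x) - 2 / s) ∧
    (1 / 2 + Φalg x' - Φalg x ≥ (p + Φno x' - Φno x) - 2 / s) :=
  stmt14_general T hT x
end

section
/- One-step invariant for the 'right' move: with p = x/√T, x ∈ [0, √T - 1], and x' = x + 1, we have [(1/2)(2p - 1) + Φ_alg(x+1) - Φ_alg(x)] ≥ [(1 - p) + Φ_yes(x+1) - Φ_yes(x)] - 2/√T and [(1/2)(2p-1) + Φ_alg(x+1) - Φ_alg(x)] ≥ [-p + Φ_no(x+1) - Φ_no(x)] - 2/√T. -/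
/-! On the move `x ↦ x + 1` each potential is quadratic, so its increment is linear in `x`, and
its linear part cancels the `p = x/√T` term exactly: the algorithm's side equals `-1/(2√T)` and
both adversary sides equal `1/(2√T)`, whatever `x` is. The gap `1/√T` is within the allowed
`2/√T`. -/

lemma balancer_alg_increment (s x : ℝ) (hs : s ≠ 0) :
    1 / 2 * (2 * (x / s) - 1) + (s / 8 - (2 * (x + 1) - s) ^ 2 / (8 * s))
      - (s / 8 - (2 * x - s) ^ 2 / (8 * s)) = -1 / (2 * s) := by
  field_simp
  ring

lemma balancer_yes_increment (s x : ℝ) (hs : s ≠ 0) :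
    (1 - x / s) + (s - (x + 1)) ^ 2 / (2 * s) - (s - x) ^ 2 / (2 * s) = 1 / (2 * s) := by
  field_simp
  ring

lemma balancer_no_increment (s x : ℝ) (hs : s ≠ 0) :
    -(x / s) + (x + 1) ^ 2 / (2 * s) - x ^ 2 / (2 * s) = 1 / (2 * s) := by
  field_simp
  ring

theorem stmt15_general (T : ℝ) (hT : 1 ≤ T) (x : ℝ) :
    let s := Real.sqrt T
    let p := x / s
    let Φalg := fun y : ℝ => s / 8 - (2 * y - s) ^ 2 / (8 * s)
    let Φyes := fun y : ℝ => (s - y) ^ 2 / (2 * s)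
    let Φno := fun y : ℝ => y ^ 2 / (2 * s)
    (1 / 2 * (2 * p - 1) + Φalg (x + 1) - Φalg x ≥ ((1 - p) + Φyes (x + 1) - Φyes x) - 2 / s) ∧
    (1 / 2 * (2 * p - 1) + Φalg (x + 1) - Φalg x ≥ (-p + Φno (x + 1) - Φno x) - 2 / s) := by
  intro s p Φalg Φyes Φno
  have hs : 0 < s := Real.sqrt_pos.mpr (by linarith)
  have hgap : -1 / (2 * s) ≥ 1 / (2 * s) - 2 / s := by
    field_simp
    linarith
  have halg := balancer_alg_increment s x hs.ne'
  have hyes := balancer_yes_increment s x hs.ne'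
  have hno := balancer_no_increment s x hs.ne'
  constructor <;> simp only [p, Φalg, Φyes, Φno] <;> linarith

/-- One-step invariant for the 'right' move `(+1,-1)`: with `p = x/√T`, `x ∈ [0, √T - 1]`,
and `x' = x + 1`, the algorithm-side change dominates both adversary-side changes up to
error `2/√T`. -/
theorem stmt15 (T : ℝ) (hT : 1 ≤ T) (x : ℝ) (hx0 : 0 ≤ x) (hx1 : x ≤ Real.sqrt T - 1) :
    let s := Real.sqrt T
    let p := x / s
    let Φalg := fun y : ℝ => s / 8 - (2 * y - s) ^ 2 / (8 * s)
    let Φyes := fun y : ℝ => (s - y) ^ 2 / (2 * s)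
    let Φno := fun y : ℝ => y ^ 2 / (2 * s)
    (1 / 2 * (2 * p - 1) + Φalg (x + 1) - Φalg x ≥ ((1 - p) + Φyes (x + 1) - Φyes x) - 2 / s) ∧
    (1 / 2 * (2 * p - 1) + Φalg (x + 1) - Φalg x ≥ (-p + Φno (x + 1) - Φno x) - 2 / s) :=
  stmt15_general T hT x
end
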